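/- (Safety) In a well-formed program of the tensor model language, every read access μ(x_i) performed during expression evaluation and every write access x_i ↦ v performed during statement evaluation satisfies x_i ∈ dom(μ); i.e., there are no out-of-bounds store accesses. -/

import Mathlib

/-- Rounding up to the nearest multiple of `M`. -/
noncomputable def roundUp (M d : ℕ) : ℕ := sInf {m : ℕ | ∃ n : ℕ, m = n * M ∧ d ≤ m}

/-- Tensor types are tuples of naturals. -/
abbrev Ty := List ℕ
/-- Multi-indices. -/
abbrev Index := List ℕ

/-- `IdxLe i t`: the multi-index `i` (with components in {1,2,…}) is bounded by `t`. -/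
def IdxLe (i t : Index) : Prop :=
  i.length = t.length ∧ ∀ l, l < t.length → 1 ≤ i.getD l 0 ∧ i.getD l 0 ≤ t.getD l 0

/-- Swap the `m`-th and `n`-th components (1-based). -/
def swapIdx (t : List ℕ) (m n : ℕ) : List ℕ :=
  (t.set (m-1) (t.getD (n-1) 0)).set (n-1) (t.getD (m-1) 0)

/-- Delete the `m`-th and `n`-th components (1-based, `m < n`). -/
def delete2 (t : List ℕ) (m n : ℕ) : List ℕ :=
  (t.eraseIdx (n-1)).eraseIdx (m-1)

/-- Insert value `l` at the `m`-th and `n`-th positions (1-based, `m < n`). -/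
def insert2 (i : List ℕ) (m n l : ℕ) : List ℕ :=
  (i.insertIdx (m-1) l).insertIdx (n-1) l

/-- Pad a tensor type componentwise. -/
noncomputable def padT (M : ℕ) (t : Ty) : Ty := t.map (roundUp M)

/-- The padding region of a type: indices within the padded bounds but not the original ones. -/
def PadReg (M : ℕ) (t : Ty) (i : Index) : Prop := ¬ IdxLe i t ∧ IdxLe i (padT M t)

inductive Op | add | sub | mul | div
deriving DecidableEq

/-- Expressions of the tensor model language. -/
inductive Expr
| var : String → Expr
| paren : Expr → Expr
| binop : Op → Expr → Expr → Expr
| prod : Expr → Expr → Expr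
| trans : Expr → ℕ → ℕ → Expr
| contr : Expr → ℕ → ℕ → Expr

/-- A static context maps identifiers to tensor types. -/
abbrev Ctx := String → Option Ty

/-- Componentwise padding of a static context. -/
noncomputable def padCtx (M : ℕ) (Γ : Ctx) : Ctx := fun x => (Γ x).map (padT M)

/-- The typing rules of the tensor model language. -/
inductive HasTy (Γ : Ctx) : Expr → Ty → Prop
| var {x t} : Γ x = some t → HasTy Γ (.var x) t
| paren {e t} : HasTy Γ e t → HasTy Γ (.paren e) t
| prod {e₀ e₁ t₀ t₁} : HasTy Γ e₀ t₀ → HasTy Γ e₁ t₁ → HasTy Γ (.prod e₀ e₁) (t₀ ++ t₁)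
| trans {e t m n} : HasTy Γ e t → 1 ≤ m → m < n → n ≤ t.length →
    HasTy Γ (.trans e m n) (swapIdx t m n)
| contr {e t m n} : HasTy Γ e t → 1 ≤ m → m < n → n ≤ t.length →
    t.getD (m-1) 0 = t.getD (n-1) 0 → HasTy Γ (.contr e m n) (delete2 t m n)
| elem {op e₀ e₁ t} : HasTy Γ e₀ t → HasTy Γ e₁ t → HasTy Γ (.binop op e₀ e₁) t
| smul {e₀ e₁ t} : HasTy Γ e₀ [] → HasTy Γ e₁ t → HasTy Γ (.binop .mul e₀ e₁) t
| sdiv {e₀ e₁ t} : HasTy Γ e₀ t → HasTy Γ e₁ [] → HasTy Γ (.binop .div e₀ e₁) t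

/-- Syntax-directed type inference. -/
def inferTy (Γ : Ctx) : Expr → Option Ty
| .var x => Γ x
| .paren e => inferTy Γ e
| .prod e₀ e₁ => do pure ((← inferTy Γ e₀) ++ (← inferTy Γ e₁))
| .trans e m n => do
    let t ← inferTy Γ e
    if 1 ≤ m ∧ m < n ∧ n ≤ t.length then pure (swapIdx t m n) else none
| .contr e m n => do
    let t ← inferTy Γ e
    if 1 ≤ m ∧ m < n ∧ n ≤ t.length ∧ t.getD (m-1) 0 = t.getD (n-1) 0 then
      pure (delete2 t m n) else none
| .binop op e₀ e₁ => do
    let t₀ ← inferTy Γ e₀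
    let t₁ ← inferTy Γ e₁
    if t₀ = t₁ then pure t₀
    else if op = .mul ∧ t₀ = [] then pure t₁
    else if op = .div ∧ t₁ = [] then pure t₀
    else none

/-- The value domain `𝕍 ∪ {•}`: `none` is the undefined value `•`. -/
abbrev W (V : Type) := Option V

/-- Extended addition: `•` is absorbing. -/
def wadd {V : Type} [Add V] : W V → W V → W V
| some a, some b => some (a + b)
| _, _ => none

def wsub {V : Type} [Sub V] : W V → W V → W V
| some a, some b => some (a - b)
| _, _ => none

def wmul {V : Type} [Mul V] : W V → W V → W V
| some a, some b => some (a * b)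
| _, _ => none

/-- Controlled division on `𝕍 ∪ {•}`: `0/0 = 0`, `0/• = 0`, otherwise `•` absorbs
    and division by zero is undefined. -/
def wdiv {V : Type} [Field V] [DecidableEq V] : W V → W V → W V
| some a, some b => if b = 0 then (if a = 0 then some 0 else none) else some (a / b)
| some a, none => if a = 0 then some 0 else none
| none, _ => none

def applyOp {V : Type} [Field V] [DecidableEq V] : Op → W V → W V → W V
| .add => wadd
| .sub => wsub
| .mul => wmul
| .div => wdiv

/-- A dynamic store: a partial map from subscripted identifiers to `𝕍 ∪ {•}`. -/
abbrev Store (V : Type) := String × Index → Option (W V)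

/-- Denotational semantics of expression evaluation; `none` means evaluation is stuck
    (not well-defined), `some w` means the result is the value `w ∈ 𝕍 ∪ {•}`. -/
def eval {V : Type} [Field V] [DecidableEq V] (Γ : Ctx) (μ : Store V) :
    Expr → Index → Option (W V)
| .var x, i => μ (x, i)
| .paren e, i => eval Γ μ e i
| .prod e₀ e₁, i => do
    let t₀ ← inferTy Γ e₀
    let v₀ ← eval Γ μ e₀ (i.take t₀.length)
    let v₁ ← eval Γ μ e₁ (i.drop t₀.length)
    pure (wmul v₀ v₁)
| .trans e m n, i => eval Γ μ e (swapIdx i m n)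
| .contr e m n, i => do
    let t ← inferTy Γ e
    let vs ← (List.range (t.getD (m-1) 0)).mapM (fun l => eval Γ μ e (insert2 i m n (l+1)))
    pure (vs.foldl wadd (some 0))
| .binop op e₀ e₁, i => do
    let t₀ ← inferTy Γ e₀
    let t₁ ← inferTy Γ e₁
    if op = .mul ∧ t₀ = [] then
      let v₀ ← eval Γ μ e₀ []
      let v₁ ← eval Γ μ e₁ i
      pure (wmul v₀ v₁)
    else if op = .div ∧ t₁ = [] then
      let v₀ ← eval Γ μ e₀ i
      let v₁ ← eval Γ μ e₁ []
      pure (wdiv v₀ v₁)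
    else
      let v₀ ← eval Γ μ e₀ i
      let v₁ ← eval Γ μ e₁ i
      pure (applyOp op v₀ v₁)

open Classical

/-- The unique initial store determined by `Γ` and the ambient values `v`. -/
noncomputable def initStore {V : Type} (Γ : Ctx) (v : String → Index → W V) : Store V :=
  fun p => match Γ p.1 with
  | some t => if IdxLe p.2 t then some (v p.1 p.2) else none
  | none => none

/-- The unique padded initial store: values on the original domain, zero on padding. -/
noncomputable def initStoreP {V : Type} [Zero V] (M : ℕ) (Γ : Ctx)
    (v : String → Index → W V) : Store V :=
  fun p => match Γ p.1 with
  | some t =>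
      if IdxLe p.2 t then some (v p.1 p.2)
      else if IdxLe p.2 (padT M t) then some (some 0)
      else none
  | none => none

/-- A statement `x = e`. -/
abbrev Stmt := String × Expr

/-- Well-formedness of a statement list in context `Γ`. -/
def Ok (Γ : Ctx) (ss : List Stmt) : Prop :=
  ∀ s ∈ ss, ∃ t, Γ s.1 = some t ∧ HasTy Γ s.2 t

/-- Evaluation of a single assignment statement (rule ev-stmt). -/
inductive StepStmt {V : Type} [Field V] [DecidableEq V] (Γ : Ctx) :
    Store V → Stmt → Store V → Prop
| mk {μ : Store V} {x e t} :
    Γ x = some t →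
    (∀ i, IdxLe i t → μ (x, i) ≠ none) →
    (∀ i, IdxLe i t → (eval Γ μ e i).isSome) →
    StepStmt Γ μ (x, e)
      (fun p => if p.1 = x ∧ IdxLe p.2 t then eval Γ μ e p.2 else μ p)

/-- Evaluation of a statement sequence. -/
inductive StepStmts {V : Type} [Field V] [DecidableEq V] (Γ : Ctx) :
    Store V → List Stmt → Store V → Prop
| nil {μ} : StepStmts Γ μ [] μ
| cons {μ μ' μ'' s ss} : StepStmt Γ μ s μ' → StepStmts Γ μ' ss μ'' →
    StepStmts Γ μ (s :: ss) μ''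

/-- Evaluation of a single assignment statement with a padded store (rule ev-pad-stmt). -/
inductive StepStmtP {V : Type} [Field V] [DecidableEq V] (M : ℕ) (Γ : Ctx) :
    Store V → Stmt → Store V → Prop
| mk {μ : Store V} {x e t} :
    Γ x = some t →
    (∀ i, IdxLe i (padT M t) → μ (x, i) ≠ none) →
    (∀ i, IdxLe i (padT M t) → (eval (padCtx M Γ) μ e i).isSome) →
    StepStmtP M Γ μ (x, e)
      (fun p => if p.1 = x ∧ IdxLe p.2 (padT M t) then eval (padCtx M Γ) μ e p.2 else μ p)

inductive StepStmtsP {V : Type} [Field V] [DecidableEq V] (M : ℕ) (Γ : Ctx) :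
    Store V → List Stmt → Store V → Prop
| nil {μ} : StepStmtsP M Γ μ [] μ
| cons {μ μ' μ'' s ss} : StepStmtP M Γ μ s μ' → StepStmtsP M Γ μ' ss μ'' →
    StepStmtsP M Γ μ (s :: ss) μ''

/-!
Safety rests on two invariants. Every store reached from `μ(Γ)` stays defined on all of
`dom μ(Γ)`, since a statement `x = e` overwrites exactly the entries `x_i` with `i ≤ Γ(x)`, and
only with defined values. And a typed expression, evaluated at an index within its type, reads
only indices within the types of its subexpressions (induction on the typing derivation). For
the second, `IdxLe` is the pointwise relation `1 ≤ iₗ ≤ tₗ`, and the index maps of `eval`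
(take/drop, swapping, double insertion) undo the type operations (`++`, `swapIdx`, `delete2`),
so they carry that relation from the result type back to the operand type.
-/

namespace List

variable {α β : Type*} {R : α → β → Prop}

theorem Forall₂.set {l₁ : List α} {l₂ : List β} (h : Forall₂ R l₁ l₂) (k : ℕ) {a : α} {b : β}
    (hab : R a b) : Forall₂ R (l₁.set k a) (l₂.set k b) := by
  induction h generalizing k with
  | nil => simp
  | cons hr h ih => cases k <;> simp [hr, hab, h, ih]

theorem Forall₂.insertIdx {l₁ : List α} {l₂ : List β} (h : Forall₂ R l₁ l₂) (k : ℕ) {a : α}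
    {b : β} (hab : R a b) : Forall₂ R (l₁.insertIdx k a) (l₂.insertIdx k b) := by
  induction h generalizing k with
  | nil => cases k <;> simp [hab]
  | cons hr h ih => cases k <;> simp [hr, hab, h, ih]

theorem Forall₂.getD {l₁ : List α} {l₂ : List β} (h : Forall₂ R l₁ l₂) {k : ℕ}
    (hk : k < l₁.length) (d₁ : α) (d₂ : β) : R (l₁.getD k d₁) (l₂.getD k d₂) := by
  rw [getD_eq_getElem _ _ hk, getD_eq_getElem _ _ (h.length_eq ▸ hk)]
  exact h.get hk _

theorem isSome_mapM {f : α → Option β} {l : List α} (h : ∀ a ∈ l, (f a).isSome) :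
    (l.mapM f).isSome := by
  induction l with
  | nil => rfl
  | cons a l ih =>
    obtain ⟨b, hb⟩ := Option.isSome_iff_exists.mp (h a mem_cons_self)
    obtain ⟨bs, hbs⟩ := Option.isSome_iff_exists.mp (ih fun x hx => h x (mem_cons_of_mem a hx))
    simp [mapM_cons, hb, hbs]

end List

theorem swapIdx_swapIdx {t : List ℕ} {m n : ℕ} (hm : 1 ≤ m) (hmn : m < n) (hn : n ≤ t.length) :
    swapIdx (swapIdx t m n) m n = t := by
  apply List.ext_getElem (by simp [swapIdx])
  intro j h₁ h₂
  simp only [swapIdx, List.getElem_set, List.getD_eq_getElem?_getD, List.getElem?_set,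
    List.length_set]
  split_ifs <;> simp_all <;> omega

theorem insert2_delete2 {t : List ℕ} {m n : ℕ} (hm : 1 ≤ m) (hmn : m < n) (hn : n ≤ t.length)
    (heq : t.getD (m-1) 0 = t.getD (n-1) 0) :
    insert2 (delete2 t m n) m n (t.getD (m-1) 0) = t := by
  have hlen : m - 1 < (t.eraseIdx (n-1)).length := by
    rw [List.length_eraseIdx_of_lt (by omega)]; omega
  have hfirst : t.getD (m-1) 0 = (t.eraseIdx (n-1))[m-1] := by
    rw [List.getElem_eraseIdx_of_lt _ (by omega), List.getD_eq_getElem]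
  rw [insert2, delete2, hfirst, List.insertIdx_eraseIdx_getElem hlen, ← hfirst, heq,
    List.getD_eq_getElem _ _ (by omega), List.insertIdx_eraseIdx_getElem]

theorem idxLe_iff_forall₂ {i t : Index} :
    IdxLe i t ↔ List.Forall₂ (fun a b => 1 ≤ a ∧ a ≤ b) i t := by
  rw [List.forall₂_iff_get, IdxLe]
  refine and_congr_right fun hlen => ⟨fun h j h₁ h₂ => ?_, fun h j hj => ?_⟩
  · have := h j h₂
    rwa [List.getD_eq_getElem _ _ h₁, List.getD_eq_getElem _ _ h₂] at this
  · rw [List.getD_eq_getElem _ _ (hlen ▸ hj), List.getD_eq_getElem _ _ hj]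
    exact h j _ hj

namespace IdxLe

variable {i : Index}

theorem take_of_append {t₀ t₁ : Ty} (h : IdxLe i (t₀ ++ t₁)) : IdxLe (i.take t₀.length) t₀ := by
  rw [idxLe_iff_forall₂] at h ⊢
  exact List.forall₂_take_append _ _ _ h

theorem drop_of_append {t₀ t₁ : Ty} (h : IdxLe i (t₀ ++ t₁)) : IdxLe (i.drop t₀.length) t₁ := by
  rw [idxLe_iff_forall₂] at h ⊢
  exact List.forall₂_drop_append _ _ _ h

theorem swapIdx_of_swapIdx {t : Ty} {m n : ℕ} (hm : 1 ≤ m) (hmn : m < n) (hn : n ≤ t.length)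
    (h : IdxLe i (swapIdx t m n)) : IdxLe (swapIdx i m n) t := by
  rw [idxLe_iff_forall₂] at h ⊢
  have hlen : i.length = t.length := by simpa [swapIdx] using h.length_eq
  rw [← swapIdx_swapIdx hm hmn hn]
  exact (h.set _ (h.getD (by omega) 0 0)).set _ (h.getD (by omega) 0 0)

theorem insert2_of_delete2 {t : Ty} {m n v : ℕ} (hm : 1 ≤ m) (hmn : m < n) (hn : n ≤ t.length)
    (heq : t.getD (m-1) 0 = t.getD (n-1) 0) (h : IdxLe i (delete2 t m n))
    (hv : 1 ≤ v ∧ v ≤ t.getD (m-1) 0) : IdxLe (insert2 i m n v) t := by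
  rw [idxLe_iff_forall₂] at h ⊢
  rw [← insert2_delete2 hm hmn hn heq]
  exact (h.insertIdx _ hv).insertIdx _ hv

theorem eq_nil (h : IdxLe i []) : i = [] :=
  List.eq_nil_of_length_eq_zero h.1

end IdxLe

theorem HasTy.inferTy_eq {Γ : Ctx} {e : Expr} {t : Ty} (h : HasTy Γ e t) :
    inferTy Γ e = some t := by
  induction h with
  | var hx => simpa [inferTy]
  | paren _ ih => simpa [inferTy]
  | prod _ _ ih₀ ih₁ => simp [inferTy, ih₀, ih₁]
  | trans _ hm hmn hn ih => simp [inferTy, ih, hm, hmn, hn]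
  | contr _ hm hmn hn heq ih => simpa [inferTy, ih, hm, hmn, hn] using heq
  | elem _ _ ih₀ ih₁ => simp [inferTy, ih₀, ih₁]
  | smul _ _ ih₀ ih₁ => simp [inferTy, ih₀, ih₁]
  | sdiv _ _ ih₀ ih₁ => simp [inferTy, ih₀, ih₁]

/-- `dom μ(Γ) ⊆ dom μ`. -/
def StoreCovers {V : Type} (Γ : Ctx) (μ : Store V) : Prop :=
  ∀ x t, Γ x = some t → ∀ i, IdxLe i t → μ (x, i) ≠ none

theorem initStore_covers {V : Type} (Γ : Ctx) (v : String → Index → W V) :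
    StoreCovers Γ (initStore Γ v) := by
  intro x t hx i hi
  simp [initStore, hx, hi]

section Eval

variable {V : Type} [Field V] [DecidableEq V] {Γ : Ctx} {μ : Store V}

theorem HasTy.eval_isSome (hμ : StoreCovers Γ μ) {e : Expr} {t : Ty} (h : HasTy Γ e t)
    {i : Index} (hi : IdxLe i t) : (eval Γ μ e i).isSome := by
  induction h generalizing i with
  | var hx => simpa [eval, Option.isSome_iff_ne_none] using hμ _ _ hx _ hi
  | paren _ ih => simpa [eval] using ih hi
  | prod h₀ _ ih₀ ih₁ =>
    obtain ⟨v₀, hv₀⟩ := Option.isSome_iff_exists.mp (ih₀ hi.take_of_append)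
    obtain ⟨v₁, hv₁⟩ := Option.isSome_iff_exists.mp (ih₁ hi.drop_of_append)
    simp [eval, h₀.inferTy_eq, hv₀, hv₁]
  | trans _ hm hmn hn ih => simpa [eval] using ih (hi.swapIdx_of_swapIdx hm hmn hn)
  | @contr e t m n h hm hmn hn heq ih =>
    obtain ⟨vs, hvs⟩ := Option.isSome_iff_exists.mp <|
      List.isSome_mapM (l := List.range (t.getD (m-1) 0))
        (f := fun l => eval Γ μ e (insert2 i m n (l+1))) fun l hl =>
          ih (hi.insert2_of_delete2 hm hmn hn heq ⟨by omega, List.mem_range.mp hl⟩)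
    simp only [eval, h.inferTy_eq, Option.bind_eq_bind, Option.bind_some, hvs]
    rfl
  | @elem op e₀ e₁ t h₀ h₁ ih₀ ih₁ =>
    obtain ⟨v₀, hv₀⟩ := Option.isSome_iff_exists.mp (ih₀ hi)
    obtain ⟨v₁, hv₁⟩ := Option.isSome_iff_exists.mp (ih₁ hi)
    rcases eq_or_ne t [] with rfl | ht
    · obtain rfl := hi.eq_nil
      simp only [eval, h₀.inferTy_eq, h₁.inferTy_eq, hv₀, hv₁, Option.bind_eq_bind,
        Option.bind_some]
      split_ifs <;> rfl
    · simp [eval, h₀.inferTy_eq, h₁.inferTy_eq, ht, hv₀, hv₁]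
  | smul h₀ h₁ ih₀ ih₁ =>
    obtain ⟨v₀, hv₀⟩ := Option.isSome_iff_exists.mp (ih₀ (i := []) ⟨rfl, by simp⟩)
    obtain ⟨v₁, hv₁⟩ := Option.isSome_iff_exists.mp (ih₁ hi)
    simp [eval, h₀.inferTy_eq, h₁.inferTy_eq, hv₀, hv₁]
  | sdiv h₀ h₁ ih₀ ih₁ =>
    obtain ⟨v₀, hv₀⟩ := Option.isSome_iff_exists.mp (ih₀ hi)
    obtain ⟨v₁, hv₁⟩ := Option.isSome_iff_exists.mp (ih₁ (i := []) ⟨rfl, by simp⟩)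
    simp [eval, h₀.inferTy_eq, h₁.inferTy_eq, hv₀, hv₁]

theorem StepStmt.covers {μ' : Store V} {s : Stmt} (h : StepStmt Γ μ s μ')
    (hμ : StoreCovers Γ μ) : StoreCovers Γ μ' := by
  obtain ⟨-, -, hdef⟩ := h
  intro y ty hy i hi
  dsimp only
  split_ifs with hc
  · exact Option.isSome_iff_ne_none.mp (hdef i hc.2)
  · exact hμ y ty hy i hi

theorem StepStmts.covers {μ' : Store V} {ss : List Stmt} (h : StepStmts Γ μ ss μ')
    (hμ : StoreCovers Γ μ) : StoreCovers Γ μ' := by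
  induction h with
  | nil => exact hμ
  | cons h₁ _ ih => exact ih (h₁.covers hμ)

end Eval

/-- **Safety**: in a well-formed program, whenever a statement `x = e` is reached
with intermediate store `μ₁`, every write target `x_i` (`i ≤ Γ(x)`) is in the
domain of the store, and evaluation of `e` at every `i ≤ Γ(x)` is well-defined,
i.e. every read access during expression evaluation hits the store's domain:
there are no out-of-bounds store accesses. -/
theorem safety (V : Type) [Field V] [DecidableEq V] (Γ : Ctx)
    (v : String → Index → W V) (ss : List Stmt) (hok : Ok Γ ss) :
    ∀ ss₁ x e ss₂, ss = ss₁ ++ (x, e) :: ss₂ →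
    ∀ μ₁ : Store V, StepStmts Γ (initStore Γ v) ss₁ μ₁ →
    ∀ t, Γ x = some t →
      (∀ i, IdxLe i t → μ₁ (x, i) ≠ none) ∧
      (∀ i, IdxLe i t → (eval Γ μ₁ e i).isSome) := by
  intro ss₁ x e ss₂ hss μ₁ hsteps t hx
  have hμ₁ : StoreCovers Γ μ₁ := hsteps.covers (initStore_covers Γ v)
  obtain ⟨t', hx', hty⟩ := hok (x, e) (by simp [hss])
  obtain rfl : t = t' := Option.some_injective _ (hx.symm.trans hx')
  exact ⟨hμ₁ x t hx, fun i hi => hty.eval_isSome hμ₁ hi⟩
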